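/- Let G be a simple graph of order p ≥ 4. If e(G) < p when 3 ∣ p, e(G) < p − 2 when 3 ∣ p − 1, and e(G) < p − 1 when 3 ∣ p − 2, then α(G) ≥ ⌊(p+2)/3⌋ + 1. -/

import Mathlib

open SimpleGraph

/-- The number of edges of a simple graph. -/
noncomputable def edgeCount {V : Type*} (G : SimpleGraph V) : ℕ := Nat.card G.edgeSet

/-- The degree of a vertex in a simple graph. -/
noncomputable def degreeCount {V : Type*} (G : SimpleGraph V) (v : V) : ℕ := Nat.card (G.neighborSet v)

/-- A finset of vertices is independent in `G`. -/
def IsIndepFinset {V : Type*} (G : SimpleGraph V) (s : Finset V) : Prop :=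
  ∀ u ∈ s, ∀ v ∈ s, u ≠ v → ¬ G.Adj u v

/-- The independence number of a simple graph. -/
noncomputable def indepNum' {V : Type*} (G : SimpleGraph V) : ℕ :=
  sSup {n | ∃ s : Finset V, IsIndepFinset G s ∧ s.card = n}

/-- `G` contains a subgraph isomorphic to `H`, i.e. there is an injective
graph homomorphism from `H` to `G`. -/
def ContainsCopy {V W : Type*} (G : SimpleGraph V) (H : SimpleGraph W) : Prop :=
  ∃ f : H →g G, Function.Injective f

/-- `G` contains no subgraph isomorphic to any graph in the family `L`. -/
def FamilyFree {V : Type*} (L : Set (Σ n : ℕ, SimpleGraph (Fin n))) (G : SimpleGraph V) : Prop :=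
  ∀ H ∈ L, ¬ ContainsCopy G H.2

/-- `ex(p; L)`: the maximal number of edges in a graph of order `p`
containing no subgraph isomorphic to a member of `L`. -/
noncomputable def exNum (p : ℕ) (L : Set (Σ n : ℕ, SimpleGraph (Fin n))) : ℕ :=
  sSup {m | ∃ G : SimpleGraph (Fin p), FamilyFree L G ∧ edgeCount G = m}

/-- `G` is an `(n,m)` graph: every subgraph induced by `n` vertices has at most `m` edges. -/
def IsNMGraph {V : Type*} (n m : ℕ) (G : SimpleGraph V) : Prop :=
  ∀ s : Finset V, s.card = n → edgeCount (G.induce (↑s : Set V)) ≤ m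

/-- `e(n,m;p)`: the maximal number of edges in an `(n,m)` graph of order `p`. -/
noncomputable def maxEdgesNM (n m p : ℕ) : ℕ :=
  sSup {e | ∃ G : SimpleGraph (Fin p), IsNMGraph n m G ∧ edgeCount G = e}

/-- The Ramsey property for `R(n,r;k,s)` at order `p`: every graph `G` of order `p`
either contains a subgraph induced by `n` vertices with at most `r-1` edges, or its
complement contains a subgraph induced by `k` vertices with at most `s-1` edges. -/
def RamseyProp (n r k s p : ℕ) : Prop :=
  ∀ G : SimpleGraph (Fin p),
    (∃ t : Finset (Fin p), t.card = n ∧ edgeCount (G.induce (↑t : Set (Fin p))) ≤ r - 1) ∨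
    (∃ t : Finset (Fin p), t.card = k ∧ edgeCount ((Gᶜ).induce (↑t : Set (Fin p))) ≤ s - 1)

/-- The generalized Ramsey number `R(n,r;k,s)`. -/
noncomputable def genRamsey (n r k s : ℕ) : ℕ :=
  sInf {p | 0 < p ∧ RamseyProp n r k s p}

/-- `G` satisfies the `(k,s)` condition: every subgraph induced by `k` vertices
has at least `s` edges. -/
def KSCondition {V : Type*} (k s : ℕ) (G : SimpleGraph V) : Prop :=
  ∀ t : Finset V, t.card = k → s ≤ edgeCount (G.induce (↑t : Set V))


universe u

lemma edgeCount_eq_card_edgeFinset {V : Type*} [Fintype V] [DecidableEq V]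
    (G : SimpleGraph V) [DecidableRel G.Adj] :
    edgeCount G = G.edgeFinset.card := by
  rw [edgeCount, Nat.card_eq_fintype_card, ← SimpleGraph.edgeFinset_card]

lemma key_lemma : ∀ (n : ℕ) {V : Type u} [Fintype V], Fintype.card V = n →
    ∀ (G : SimpleGraph V) (a : ℕ),
      (∀ s : Finset V, IsIndepFinset G s → s.card ≤ a) →
      n * n ≤ 2 * a * edgeCount G + n * a := by
  intro n
  induction n using Nat.strong_induction_on with
  | _ n ih =>
    intro V _ hV G a hind
    classical
    rcases Nat.eq_zero_or_pos n with hn0 | hn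
    · simp [hn0]
    -- pick a maximum-cardinality independent set
    have hne : (Finset.univ.filter (fun s : Finset V => IsIndepFinset G s)).Nonempty := by
      refine ⟨∅, ?_⟩
      exact Finset.mem_filter.mpr ⟨Finset.mem_univ _, by simp [IsIndepFinset]⟩
    obtain ⟨S, hSmem, hSmax⟩ :=
      Finset.exists_max_image _ (fun s : Finset V => s.card) hne
    have hSind : IsIndepFinset G S := (Finset.mem_filter.mp hSmem).2
    have hSa : S.card ≤ a := hind S hSind
    -- S is nonempty
    have hV1 : 0 < Fintype.card V := hV ▸ hn
    obtain ⟨v0⟩ := Fintype.card_pos_iff.mp hV1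
    have hS1 : 1 ≤ S.card := by
      have : ({v0} : Finset V).card ≤ S.card := by
        apply hSmax
        simp only [Finset.mem_filter, Finset.mem_univ, true_and]
        intro u hu w hw huw
        simp only [Finset.mem_singleton] at hu hw
        exact absurd (hu.trans hw.symm) huw
      simpa using this
    -- every vertex outside S has a neighbor in S
    have hnbr : ∀ v ∉ S, ∃ w ∈ S, G.Adj v w := by
      intro v hv
      by_contra hno
      push_neg at hno
      have hins : IsIndepFinset G (insert v S) := by
        intro u hu w hw huw hadj
        rcases Finset.mem_insert.mp hu with hu' | hu'
        · rcases Finset.mem_insert.mp hw with hw' | hw'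
          · exact huw (hu'.trans hw'.symm)
          · exact hno w hw' (by rwa [hu'] at hadj)
        · rcases Finset.mem_insert.mp hw with hw' | hw'
          · exact hno u hu' (by rw [hw'] at hadj; exact hadj.symm)
          · exact hSind u hu' w hw' huw hadj
      have := hSmax (insert v S) (by simp [hins])
      rw [Finset.card_insert_of_notMem hv] at this
      omega
    choose! f hfS hfAdj using hnbr
    set T : Finset V := Sᶜ with hT
    have hTmem : ∀ v, v ∈ T ↔ v ∉ S := fun v => Finset.mem_compl
    -- edges from T to S
    set A : Finset (Sym2 V) := T.image (fun v => s(v, f v)) with hA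
    have hAcard : A.card = T.card := by
      rw [hA]
      apply Finset.card_image_of_injOn
      intro x hx y hy hxy
      rw [Sym2.eq_iff] at hxy
      rcases hxy with ⟨h1, -⟩ | ⟨h1, -⟩
      · exact h1
      · exfalso
        have hxS : f y ∈ S := hfS y ((hTmem y).mp hy)
        rw [← h1] at hxS
        exact (hTmem x).mp hx hxS
    -- induced subgraph on T
    set G' : SimpleGraph (↑(T : Set V)) := G.induce (T : Set V) with hG'
    set B : Finset (Sym2 V) := G'.edgeFinset.image (Sym2.map Subtype.val) with hB
    have hBcard : B.card = edgeCount G' := by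
      rw [hB, Finset.card_image_of_injective _ (Sym2.map.injective Subtype.val_injective),
        edgeCount_eq_card_edgeFinset]
    have hAsub : A ⊆ G.edgeFinset := by
      intro e he
      rw [hA] at he
      obtain ⟨v, hv, rfl⟩ := Finset.mem_image.mp he
      rw [SimpleGraph.mem_edgeFinset, SimpleGraph.mem_edgeSet]
      exact hfAdj v ((hTmem v).mp hv)
    have hBsub : B ⊆ G.edgeFinset := by
      intro e he
      rw [hB] at he
      obtain ⟨e', he', rfl⟩ := Finset.mem_image.mp he
      induction e' with
      | _ x y =>
        rw [SimpleGraph.mem_edgeFinset, SimpleGraph.mem_edgeSet] at he'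
        rw [Sym2.map_pair_eq, SimpleGraph.mem_edgeFinset, SimpleGraph.mem_edgeSet]
        exact he'
    have hdisj : Disjoint A B := by
      rw [Finset.disjoint_left]
      intro e heA heB
      rw [hA] at heA
      obtain ⟨v, hv, rfl⟩ := Finset.mem_image.mp heA
      rw [hB] at heB
      obtain ⟨e', he', hmap⟩ := Finset.mem_image.mp heB
      have : f v ∈ Sym2.map Subtype.val e' := by
        rw [hmap]; simp [Sym2.mem_iff]
      rw [Sym2.mem_map] at this
      obtain ⟨w, -, hw⟩ := this
      have : f v ∈ (T : Set V) := hw ▸ w.2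
      exact ((hTmem (f v)).mp this) (hfS v ((hTmem v).mp hv))
    have hcount : edgeCount G' + T.card ≤ edgeCount G := by
      have := Finset.card_le_card (Finset.union_subset hAsub hBsub)
      rw [Finset.card_union_of_disjoint hdisj, hAcard, hBcard] at this
      rw [edgeCount_eq_card_edgeFinset G]
      omega
    -- apply induction hypothesis on G'
    have hTcardV : Fintype.card (↑(T : Set V)) = T.card := by
      simp
    have hTn : T.card = n - S.card := by
      have h' := Finset.card_compl S
      rw [← hT] at h'
      omega
    have hTlt : T.card < n := by omega
    have hind' : ∀ s : Finset (↑(T : Set V)), IsIndepFinset G' s → s.card ≤ a := by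
      intro s hs
      have : IsIndepFinset G (s.image Subtype.val) := by
        intro u hu w hw huw
        obtain ⟨u', hu', rfl⟩ := Finset.mem_image.mp hu
        obtain ⟨w', hw', rfl⟩ := Finset.mem_image.mp hw
        have hne : u' ≠ w' := fun h => huw (by rw [h])
        exact hs u' hu' w' hw' hne
      have := hind _ this
      rwa [Finset.card_image_of_injective _ Subtype.val_injective] at this
    have hIH := ih T.card hTlt hTcardV G' a hind'
    have hns : T.card + S.card = n := by
      have hle := Finset.card_le_univ S
      rw [hV] at hle
      omega
    have h2e : 2 * a * edgeCount G' + 2 * a * T.card ≤ 2 * a * edgeCount G := by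
      calc 2 * a * edgeCount G' + 2 * a * T.card = 2 * a * (edgeCount G' + T.card) := by ring
        _ ≤ 2 * a * edgeCount G := Nat.mul_le_mul_left _ hcount
    have k1 : S.card * T.card ≤ a * T.card := Nat.mul_le_mul_right _ hSa
    have k2 : S.card * S.card ≤ S.card * a := Nat.mul_le_mul_left _ hSa
    have hfin : (T.card + S.card) * (T.card + S.card) ≤
        2 * a * edgeCount G + (T.card + S.card) * a := by nlinarith [hIH, h2e, k1, k2]
    rwa [hns] at hfin

theorem stmt_9 (p : ℕ) (hp : 4 ≤ p) {V : Type*} [Fintype V] (hV : Fintype.card V = p)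
    (G : SimpleGraph V)
    (h0 : 3 ∣ p → edgeCount G < p)
    (h1 : 3 ∣ p - 1 → edgeCount G < p - 2)
    (h2 : 3 ∣ p - 2 → edgeCount G < p - 1) :
    (p + 2) / 3 + 1 ≤ indepNum' G := by
  classical
  by_contra hcon
  push_neg at hcon
  set a := (p + 2) / 3 with ha
  have hbdd : ∀ s : Finset V, IsIndepFinset G s → s.card ≤ a := by
    intro s hs
    have hmem : s.card ∈ {n | ∃ t : Finset V, IsIndepFinset G t ∧ t.card = n} := ⟨s, hs, rfl⟩
    have hb : BddAbove {n | ∃ t : Finset V, IsIndepFinset G t ∧ t.card = n} := by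
      refine ⟨Fintype.card V, ?_⟩
      rintro x ⟨t, -, rfl⟩
      have := Finset.card_le_univ t
      simpa using this
    have hle : s.card ≤ indepNum' G := le_csSup hb hmem
    have h2 : indepNum' G ≤ a := by omega
    exact hle.trans h2
  have hkey := key_lemma p hV G a hbdd
  have hdiv : 3 ∣ p ∨ 3 ∣ p - 1 ∨ 3 ∣ p - 2 := by omega
  rcases hdiv with h | h | h
  · obtain ⟨m, hm⟩ := h
    have he := h0 ⟨m, hm⟩
    have ham : a = m := by omega
    rw [hm, ham] at hkey
    have hmul : 2 * m * (edgeCount G + 1) ≤ 2 * m * (3 * m) :=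
      Nat.mul_le_mul_left _ (by omega)
    nlinarith [hkey, hmul, hp, hm]
  · have he := h1 h
    obtain ⟨m, hm⟩ := h
    have hm' : p = 3 * m + 1 := by omega
    have ham : a = m + 1 := by omega
    rw [hm', ham] at hkey
    have hmul : 2 * (m + 1) * (edgeCount G + 2) ≤ 2 * (m + 1) * (3 * m) :=
      Nat.mul_le_mul_left _ (by omega)
    nlinarith [hkey, hmul]
  · have he := h2 h
    obtain ⟨m, hm⟩ := h
    have hm' : p = 3 * m + 2 := by omega
    have ham : a = m + 1 := by omega
    rw [hm', ham] at hkey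
    have hmul : 2 * (m + 1) * edgeCount G ≤ 2 * (m + 1) * (3 * m) :=
      Nat.mul_le_mul_left _ (by omega)
    nlinarith [hkey, hmul]
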